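/- arXiv:0903.0753 — 4 statements merged into one kernel-verified Lean document; each statement's English description precedes it below -/
import Mathlib

section
/- If the sum of distances from points to the three sides of a triangle takes the same value at three non-collinear interior points, then the triangle is equilateral. -/
/-!
Inside the triangle, the distance from `P` to a side line is the barycentric coordinate of `P`
at the opposite vertex times the altitude from that vertex, so `triSum` agrees on the interior
with an affine function. An affine function of the plane that is constant on three non-collinear
points is constant; its values at the vertices are the three altitudes, which are therefore
equal. Since each altitude times the opposite side is twice the area, the sides are equal.
-/

open Metric

noncomputable section

abbrev E2 := EuclideanSpace ℝ (Fin 2)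

/-- The sum of the distances from a point `P` to the lines containing the three sides
of the triangle `ABC`. -/
def triSum (A B C P : E2) : ℝ :=
  infDist P (affineSpan ℝ {B, C} : Set E2) + infDist P (affineSpan ℝ {A, C} : Set E2)
    + infDist P (affineSpan ℝ {A, B} : Set E2)

open Module
open scoped RealInnerProductSpace

namespace AffineBasis

variable {ι k V P : Type*} [Fintype ι] [Ring k] [AddCommGroup V] [Module k V] [AddTorsor V P]

theorem apply_eq_coord_mul_of_forall_ne (b : AffineBasis ι k P) (f : P →ᵃ[k] k) {i : ι}
    (hf : ∀ j ≠ i, f (b j) = 0) (p : P) : f p = b.coord i p * f (b i) := by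
  have hw := b.sum_coord_apply_eq_one p
  conv_lhs => rw [← b.affineCombination_coord_eq_self p]
  rw [Finset.map_affineCombination _ _ _ hw,
    Finset.affineCombination_eq_linear_combination _ _ _ hw]
  exact Finset.sum_eq_single i (fun j _ hj => by simp [hf j hj]) (by simp)

end AffineBasis

namespace Orientation

variable {V P : Type*} [NormedAddCommGroup V] [InnerProductSpace ℝ V] [MetricSpace P]
  [NormedAddTorsor V P] [Fact (finrank ℝ V = 2)] (o : Orientation ℝ V (Fin 2))

local notation "ω" => o.areaForm

theorem norm_sub_smul_eq_abs_areaForm_div {u : V} (hu : u ≠ 0) (v : V) :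
    ‖v - (⟪u, v⟫ / ‖u‖ ^ 2) • u‖ = |ω u v| / ‖u‖ := by
  have hu0 : 0 < ‖u‖ := norm_pos_iff.2 hu
  refine (sq_eq_sq₀ (norm_nonneg _) (by positivity)).1 ?_
  rw [div_pow, sq_abs, eq_div_iff (by positivity), norm_sub_sq_real, real_inner_smul_right,
    norm_smul, mul_pow, Real.norm_eq_abs, sq_abs, real_inner_comm u v]
  field_simp
  linear_combination -o.inner_sq_add_areaForm_sq u v

theorem areaForm_vsub_eq_of_mem_affineSpan_pair {x y z : P} (hz : z ∈ line[ℝ, x, y]) (p : P) :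
    ω (y -ᵥ x) (p -ᵥ z) = ω (y -ᵥ x) (p -ᵥ x) := by
  rw [← vsub_vadd z x, vadd_left_mem_affineSpan_pair] at hz
  obtain ⟨t, ht⟩ := hz
  rw [← vsub_add_vsub_cancel p z x, ← ht]
  simp [o.areaForm_apply_self]

theorem infDist_affineSpan_pair {x y : P} (h : x ≠ y) (p : P) :
    infDist p (line[ℝ, x, y] : Set P) = |ω (y -ᵥ x) (p -ᵥ x)| / dist x y := by
  have hu : y -ᵥ x ≠ 0 := vsub_ne_zero.2 h.symm
  rw [dist_eq_norm_vsub' V]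
  apply le_antisymm
  · refine (infDist_le_dist_of_mem (smul_vsub_vadd_mem_affineSpan_pair
      (⟪y -ᵥ x, p -ᵥ x⟫ / ‖y -ᵥ x‖ ^ 2) x y)).trans_eq ?_
    rw [dist_eq_norm_vsub V, vsub_vadd_eq_vsub_sub, o.norm_sub_smul_eq_abs_areaForm_div hu]
  · rw [le_infDist ⟨x, left_mem_affineSpan_pair ℝ x y⟩]
    intro z hz
    rw [div_le_iff₀ (norm_pos_iff.2 hu), ← o.areaForm_vsub_eq_of_mem_affineSpan_pair hz,
      dist_eq_norm_vsub V, mul_comm]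
    exact o.abs_areaForm_le _ _

theorem areaForm_vsub_vsub_rotate (x y z : P) :
    ω (z -ᵥ y) (x -ᵥ y) = ω (y -ᵥ x) (z -ᵥ x) := by
  rw [← vsub_sub_vsub_cancel_right z y x, ← neg_vsub_eq_vsub_rev y x, map_neg, map_sub,
    LinearMap.sub_apply, o.areaForm_apply_self, o.areaForm_swap (z -ᵥ x)]
  ring

theorem infDist_affineSpan_pair_mul_dist (x y z : P) :
    infDist x (line[ℝ, y, z] : Set P) * dist y z = |ω (y -ᵥ x) (z -ᵥ x)| := by
  rcases eq_or_ne y z with rfl | h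
  · simp [o.areaForm_apply_self]
  rw [o.infDist_affineSpan_pair h, div_mul_cancel₀ _ (dist_ne_zero.2 h),
    o.areaForm_vsub_vsub_rotate]

end Orientation

namespace EuclideanGeometry

variable {V P : Type*} [NormedAddCommGroup V] [InnerProductSpace ℝ V] [MetricSpace P]
  [NormedAddTorsor V P]

theorem infDist_affineSpan_pair_pos {x y z : P} (h : AffineIndependent ℝ ![x, y, z]) :
    0 < infDist x (line[ℝ, y, z] : Set P) := by
  refine ((line[ℝ, y, z]).closed_of_finiteDimensional.notMem_iff_infDist_pos
    ⟨y, left_mem_affineSpan_pair ℝ y z⟩).1 fun hx => ?_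
  exact affineIndependent_iff_not_collinear_set.1 h (collinear_insert_of_mem_affineSpan_pair hx)

variable [Fact (finrank ℝ V = 2)]

attribute [local instance] FiniteDimensional.of_fact_finrank_eq_two

theorem infDist_affineSpan_pair_mul_dist_comm (x y z : P) :
    infDist x (line[ℝ, y, z] : Set P) * dist y z =
      infDist y (line[ℝ, x, z] : Set P) * dist x z := by
  let o : Orientation ℝ V (Fin 2) := (Module.finBasisOfFinrankEq ℝ V Fact.out).orientation
  rw [o.infDist_affineSpan_pair_mul_dist, o.infDist_affineSpan_pair_mul_dist,
    ← o.areaForm_vsub_vsub_rotate x y z, o.areaForm_swap, abs_neg]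

theorem infDist_affineSpan_pair_eq_abs_coord_mul (b : AffineBasis (Fin 3) ℝ P) {i j k : Fin 3}
    (p : P) (hij : i ≠ j := by decide) (hik : i ≠ k := by decide) (hjk : j ≠ k := by decide) :
    infDist p (line[ℝ, b j, b k] : Set P) =
      |b.coord i p| * infDist (b i) (line[ℝ, b j, b k] : Set P) := by
  let o : Orientation ℝ V (Fin 2) := (Module.finBasisOfFinrankEq ℝ V Fact.out).orientation
  have hb : b j ≠ b k := b.ind.injective.ne hjk
  rw [o.infDist_affineSpan_pair hb, o.infDist_affineSpan_pair hb, ← mul_div_assoc, ← abs_mul]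
  congr 2
  let f : P →ᵃ[ℝ] ℝ :=
    (o.areaForm (b k -ᵥ b j)).toAffineMap.comp (AffineMap.id ℝ P -ᵥ AffineMap.const ℝ P (b j))
  refine b.apply_eq_coord_mul_of_forall_ne f (fun l hl => ?_) p
  obtain rfl | rfl : l = j ∨ l = k := by omega
  · simp [f]
  · simp [f, o.areaForm_apply_self]

end EuclideanGeometry

open EuclideanGeometry
open scoped EuclideanSpace

theorem triSum_eq_of_mem_interior (b : AffineBasis (Fin 3) ℝ E2) {P : E2}
    (hP : P ∈ interior (convexHull ℝ (Set.range b))) :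
    triSum (b 0) (b 1) (b 2) P = b.coord 0 P * infDist (b 0) (line[ℝ, b 1, b 2] : Set E2)
      + b.coord 1 P * infDist (b 1) (line[ℝ, b 0, b 2] : Set E2)
      + b.coord 2 P * infDist (b 2) (line[ℝ, b 0, b 1] : Set E2) := by
  rw [b.interior_convexHull] at hP
  rw [triSum, infDist_affineSpan_pair_eq_abs_coord_mul b (i := 0) (j := 1) (k := 2) P,
    infDist_affineSpan_pair_eq_abs_coord_mul b (i := 1) (j := 0) (k := 2) P,
    infDist_affineSpan_pair_eq_abs_coord_mul b (i := 2) (j := 0) (k := 1) P,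
    abs_of_pos (hP 0), abs_of_pos (hP 1), abs_of_pos (hP 2)]

/-- If the sum of distances to the three sides takes the same value at three
non-collinear interior points, then the triangle is equilateral. -/
theorem equilateral_of_three_noncollinear (A B C : E2)
    (hABC : AffineIndependent ℝ ![A, B, C])
    (P₁ P₂ P₃ : E2)
    (hP₁ : P₁ ∈ interior (convexHull ℝ ({A, B, C} : Set E2)))
    (hP₂ : P₂ ∈ interior (convexHull ℝ ({A, B, C} : Set E2)))
    (hP₃ : P₃ ∈ interior (convexHull ℝ ({A, B, C} : Set E2)))
    (hind : AffineIndependent ℝ ![P₁, P₂, P₃])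
    (h12 : triSum A B C P₁ = triSum A B C P₂)
    (h23 : triSum A B C P₂ = triSum A B C P₃) :
    dist A B = dist B C ∧ dist B C = dist C A := by
  let b : AffineBasis (Fin 3) ℝ E2 :=
    ⟨![A, B, C], hABC, hABC.affineSpan_eq_top_iff_card_eq_finrank_add_one.2 (by simp)⟩
  have hb : ⇑b = ![A, B, C] := rfl
  have hrange : Set.range b = {A, B, C} := by
    simp only [hb, Matrix.range_cons, Matrix.range_empty, Set.union_empty, Set.singleton_union]
  set hA := infDist A (line[ℝ, B, C] : Set E2)
  set hB := infDist B (line[ℝ, A, C] : Set E2)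
  set hC := infDist C (line[ℝ, A, B] : Set E2)
  let g : E2 →ᵃ[ℝ] ℝ := hA • b.coord 0 + hB • b.coord 1 + hC • b.coord 2
  have hg : ∀ P ∈ interior (convexHull ℝ {A, B, C}), triSum A B C P = g P := fun P hP => by
    rw [← hrange] at hP
    simpa [g, hb, mul_comm] using triSum_eq_of_mem_interior b hP
  have hconst : g = AffineMap.const ℝ E2 (g P₁) := by
    refine AffineMap.ext_on (hind.affineSpan_eq_top_iff_card_eq_finrank_add_one.2 (by simp)) ?_
    rintro _ ⟨i, rfl⟩
    fin_cases i <;> simp [← hg _ hP₁, ← hg _ hP₂, ← hg _ hP₃, h12, h23]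
  have hAB : hA = hB := by simpa [g] using congr($hconst (b 0)).trans congr($hconst (b 1)).symm
  have hBC : hB = hC := by simpa [g] using congr($hconst (b 1)).trans congr($hconst (b 2)).symm
  have h₁ : hA * dist B C = hB * dist A C := infDist_affineSpan_pair_mul_dist_comm A B C
  have h₂ : hC * dist A B = hA * dist B C := by
    simpa only [Set.pair_comm C B, dist_comm C B] using infDist_affineSpan_pair_mul_dist_comm C A B
  rw [← hAB] at h₁
  rw [← hBC, ← hAB] at h₂
  have hA_ne : hA ≠ 0 := (infDist_affineSpan_pair_pos hABC).ne'
  exact ⟨mul_left_cancel₀ hA_ne h₂, dist_comm A C ▸ mul_left_cancel₀ hA_ne h₁⟩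
end
end

section
/- Let K ⊆ ℝ² be convex, and for lines L₁,...,Lₙ each having K on one side, define V(p) = Σ dist(p, Lᵢ). If V takes the same value at three affinely independent points of K, then V is constant on K. -/
open Metric
open scoped InnerProductSpace

noncomputable section

/-- The line `{q : αᵢ·q + γᵢ = 0}` in ℝ². -/
def line2 (a : E2) (γ : ℝ) : Set E2 := {q : E2 | ⟪a, q⟫_ℝ + γ = 0}

/-- The sum of the distances from `p` to the lines `Lᵢ`. -/
def sumDist {n : ℕ} (a : Fin n → E2) (γ : Fin n → ℝ) (p : E2) : ℝ :=
  ∑ i, infDist p (line2 (a i) (γ i))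

/-! On `K` every signed distance `(⟪aᵢ, p⟫ + γᵢ) / ‖aᵢ‖` is nonnegative, so `V` agrees on `K`
with the affine function summing them. An affine function on the plane that takes equal values
at three affinely independent points is constant. -/

lemma infDist_setOf_inner_add_eq_zero {F : Type*} [NormedAddCommGroup F] [InnerProductSpace ℝ F]
    {a : F} (ha : a ≠ 0) (γ : ℝ) (p : F) :
    infDist p {q | ⟪a, q⟫_ℝ + γ = 0} = |⟪a, p⟫_ℝ + γ| / ‖a‖ := by
  have hna : 0 < ‖a‖ := norm_pos_iff.mpr ha
  set t := (⟪a, p⟫_ℝ + γ) / ‖a‖ ^ 2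
  have hfoot : p - t • a ∈ {q | ⟪a, q⟫_ℝ + γ = 0} := by
    simp only [Set.mem_ofPred_eq, inner_sub_right, real_inner_smul_right,
      real_inner_self_eq_norm_sq, t]
    field_simp
    ring
  refine le_antisymm ?_ ((le_infDist ⟨_, hfoot⟩).mpr fun q hq => ?_)
  · calc infDist p _ ≤ dist p (p - t • a) := infDist_le_dist_of_mem hfoot
      _ = |⟪a, p⟫_ℝ + γ| / ‖a‖ := by
        rw [dist_eq_norm, sub_sub_cancel, norm_smul, Real.norm_eq_abs, abs_div, abs_of_pos
          (pow_pos hna 2)]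
        field_simp
  · have hq : ⟪a, p⟫_ℝ + γ = ⟪a, p - q⟫_ℝ := by
      rw [inner_sub_right]; linarith [Set.mem_ofPred_eq ▸ hq]
    rw [div_le_iff₀ hna, hq, dist_eq_norm, mul_comm]
    exact abs_real_inner_le_norm a (p - q)

theorem AffineMap.eq_const_of_affineIndependent {k V P W ι : Type*} [Field k] [AddCommGroup V]
    [Module k V] [AddTorsor V P] [FiniteDimensional k V] [AddCommGroup W] [Module k W]
    [Fintype ι] {p : ι → P} (hp : AffineIndependent k p)
    (hcard : Fintype.card ι = Module.finrank k V + 1) {f : P →ᵃ[k] W} {c : W}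
    (hf : ∀ i, f (p i) = c) : f = AffineMap.const k P c :=
  AffineMap.ext_on (hp.affineSpan_eq_top_iff_card_eq_finrank_add_one.mpr hcard)
    (by rintro - ⟨i, rfl⟩; exact hf i)

def signedDistSum {n : ℕ} (a : Fin n → E2) (γ : Fin n → ℝ) : E2 →ᵃ[ℝ] ℝ :=
  (innerₛₗ ℝ (∑ i, ‖a i‖⁻¹ • a i)).toAffineMap + AffineMap.const ℝ E2 (∑ i, γ i / ‖a i‖)

lemma sumDist_eq_signedDistSum {n : ℕ} {a : Fin n → E2} (ha : ∀ i, a i ≠ 0) (γ : Fin n → ℝ)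
    {p : E2} (hp : ∀ i, 0 ≤ ⟪a i, p⟫_ℝ + γ i) : sumDist a γ p = signedDistSum a γ p := by
  simp only [signedDistSum, AffineMap.coe_add, Pi.add_apply, LinearMap.coe_toAffineMap,
    innerₛₗ_apply_apply, AffineMap.const_apply, sum_inner, real_inner_smul_left, sumDist, line2,
    ← Finset.sum_add_distrib]
  refine Finset.sum_congr rfl fun i _ => ?_
  rw [infDist_setOf_inner_add_eq_zero (ha i), abs_of_nonneg (hp i)]
  field_simp

theorem sum_dist_const_of_three_indep_general {n : ℕ} (a : Fin n → E2) (γ : Fin n → ℝ)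
    (ha : ∀ i, a i ≠ 0) (K : Set E2)
    (hside : ∀ i, ∀ p ∈ K, 0 ≤ ⟪a i, p⟫_ℝ + γ i)
    (P₁ P₂ P₃ : E2) (hP₁ : P₁ ∈ K) (hP₂ : P₂ ∈ K) (hP₃ : P₃ ∈ K)
    (hind : AffineIndependent ℝ ![P₁, P₂, P₃])
    (h12 : sumDist a γ P₁ = sumDist a γ P₂)
    (h23 : sumDist a γ P₂ = sumDist a γ P₃) :
    ∀ p ∈ K, ∀ q ∈ K, sumDist a γ p = sumDist a γ q := by
  have hV : ∀ p ∈ K, sumDist a γ p = signedDistSum a γ p := fun p hp =>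
    sumDist_eq_signedDistSum ha γ (fun i => hside i p hp)
  have hconst : signedDistSum a γ = AffineMap.const ℝ E2 (sumDist a γ P₁) := by
    refine AffineMap.eq_const_of_affineIndependent hind (by simp) fun i => ?_
    fin_cases i
    · exact (hV P₁ hP₁).symm
    · exact (h12.trans (hV P₂ hP₂)).symm
    · exact ((h12.trans h23).trans (hV P₃ hP₃)).symm
  intro p hp q hq
  rw [hV p hp, hV q hq, hconst, AffineMap.const_apply, AffineMap.const_apply]

/-- If `V(p) = Σ dist(p, Lᵢ)` takes the same value at three affinely independent points
of a convex set `K` having all the lines `Lᵢ` on one side, then `V` is constant on `K`. -/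
theorem sum_dist_const_of_three_indep {n : ℕ} (a : Fin n → E2) (γ : Fin n → ℝ)
    (ha : ∀ i, a i ≠ 0) (K : Set E2) (hK : Convex ℝ K)
    (hside : ∀ i, ∀ p ∈ K, 0 ≤ ⟪a i, p⟫_ℝ + γ i)
    (P₁ P₂ P₃ : E2) (hP₁ : P₁ ∈ K) (hP₂ : P₂ ∈ K) (hP₃ : P₃ ∈ K)
    (hind : AffineIndependent ℝ ![P₁, P₂, P₃])
    (h12 : sumDist a γ P₁ = sumDist a γ P₂)
    (h23 : sumDist a γ P₂ = sumDist a γ P₃) :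
    ∀ p ∈ K, ∀ q ∈ K, sumDist a γ p = sumDist a γ q :=
  sum_dist_const_of_three_indep_general a γ ha K hside P₁ P₂ P₃ hP₁ hP₂ hP₃ hind h12 h23
end
end

section
/- If a convex polygon is invariant under the rotation by 180° about a point O (i.e., the point reflection through O maps the polygon onto itself, permuting the lines containing its sides), then the sum of distances V(p) from any interior point p to the lines containing the sides is constant. -/
open Metric
open scoped InnerProductSpace

noncomputable section

/-!
The point reflection `σ_O` is an isometry permuting the side lines, so `V ∘ σ_O = V` on the whole
plane. On `K` every signed distance `(⟪aᵢ, x⟫ + γᵢ) / ‖aᵢ‖` is nonnegative, so there `V` is the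
affine function `x ↦ ⟪w, x⟫ + c` with `w = ∑ aᵢ / ‖aᵢ‖`. As `σ_O` preserves `K`, for `x ∈ K` this
gives `⟪w, x⟫ = ⟪w, 2O - x⟫`, i.e. `⟪w, x⟫ = ⟪w, O⟫`: `V` is constant on all of `K`.
-/

lemma infDist_line2 {a : E2} (ha : a ≠ 0) (γ : ℝ) (p : E2) :
    infDist p (line2 a γ) = |⟪a, p⟫_ℝ + γ| / ‖a‖ := by
  have hna : 0 < ‖a‖ := norm_pos_iff.mpr ha
  set t := (⟪a, p⟫_ℝ + γ) / ‖a‖ ^ 2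
  have hfoot : p - t • a ∈ line2 a γ := by
    show ⟪a, p - t • a⟫_ℝ + γ = 0
    simp only [inner_sub_right, real_inner_smul_right, real_inner_self_eq_norm_sq, t]
    field_simp
    ring
  refine le_antisymm ?_ ((le_infDist ⟨_, hfoot⟩).2 fun y hy => ?_)
  · calc infDist p (line2 a γ) ≤ dist p (p - t • a) := infDist_le_dist_of_mem hfoot
      _ = |⟪a, p⟫_ℝ + γ| / ‖a‖ := by
        rw [dist_eq_norm, sub_sub_cancel, norm_smul, Real.norm_eq_abs, abs_div,
          abs_of_pos (pow_pos hna 2)]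
        field_simp
  · have hy' : ⟪a, y⟫_ℝ + γ = 0 := hy
    rw [div_le_iff₀ hna, dist_eq_norm, mul_comm]
    calc |⟪a, p⟫_ℝ + γ| = |⟪a, p - y⟫_ℝ| := by rw [inner_sub_right]; congr 1; linarith
      _ ≤ ‖a‖ * ‖p - y‖ := abs_real_inner_le_norm a (p - y)

lemma inner_pointReflection {F : Type*} [NormedAddCommGroup F] [InnerProductSpace ℝ F]
    (w O x : F) :
    ⟪w, AffineEquiv.pointReflection ℝ O x⟫_ℝ = 2 * ⟪w, O⟫_ℝ - ⟪w, x⟫_ℝ := by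
  rw [AffineEquiv.pointReflection_apply, vsub_eq_sub, vadd_eq_add, inner_add_right,
    inner_sub_right]
  ring

lemma sumDist_pointReflection {n : ℕ} (a : Fin n → E2) (γ : Fin n → ℝ) (O : E2)
    (σ : Equiv.Perm (Fin n))
    (hLsym : ∀ i, (AffineEquiv.pointReflection ℝ O : E2 → E2) '' line2 (a i) (γ i)
      = line2 (a (σ i)) (γ (σ i))) (p : E2) :
    sumDist a γ (AffineEquiv.pointReflection ℝ O p) = sumDist a γ p := by
  have hiso : Isometry (AffineEquiv.pointReflection ℝ O : E2 → E2) :=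
    (AffineIsometryEquiv.pointReflection ℝ O).isometry
  unfold sumDist
  rw [← Equiv.sum_comp σ]
  simp only [← hLsym, infDist_image hiso]

lemma sumDist_eq_inner_add {n : ℕ} {a : Fin n → E2} (ha : ∀ i, a i ≠ 0) (γ : Fin n → ℝ)
    {p : E2} (hp : ∀ i, 0 ≤ ⟪a i, p⟫_ℝ + γ i) :
    sumDist a γ p = ⟪∑ i, ‖a i‖⁻¹ • a i, p⟫_ℝ + ∑ i, γ i / ‖a i‖ := by
  simp only [sumDist, infDist_line2 (ha _), abs_of_nonneg (hp _), sum_inner,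
    real_inner_smul_left, ← Finset.sum_add_distrib, add_div, inv_mul_eq_div]

theorem sum_dist_const_of_point_reflection_general {n : ℕ} (a : Fin n → E2) (γ : Fin n → ℝ)
    (ha : ∀ i, a i ≠ 0) (K : Set E2)
    (hside : ∀ i, ∀ p ∈ K, 0 ≤ ⟪a i, p⟫_ℝ + γ i)
    (O : E2)
    (hKsym : (AffineEquiv.pointReflection ℝ O : E2 → E2) '' K = K)
    (σ : Equiv.Perm (Fin n))
    (hLsym : ∀ i, (AffineEquiv.pointReflection ℝ O : E2 → E2) '' line2 (a i) (γ i)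
      = line2 (a (σ i)) (γ (σ i))) :
    ∀ p ∈ interior K, ∀ q ∈ interior K, sumDist a γ p = sumDist a γ q := by
  set w := ∑ i, ‖a i‖⁻¹ • a i
  set c := ∑ i, γ i / ‖a i‖
  have hconst : ∀ x ∈ K, sumDist a γ x = ⟪w, O⟫_ℝ + c := by
    intro x hx
    have hx' : AffineEquiv.pointReflection ℝ O x ∈ K := hKsym ▸ Set.mem_image_of_mem _ hx
    have hinv := sumDist_pointReflection a γ O σ hLsym x
    rw [sumDist_eq_inner_add ha γ (hside · _ hx'), inner_pointReflection,
      sumDist_eq_inner_add ha γ (hside · x hx)] at hinv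
    rw [sumDist_eq_inner_add ha γ (hside · x hx)]
    linarith
  intro p hp q hq
  rw [hconst p (interior_subset hp), hconst q (interior_subset hq)]

/-- If a convex polygon (a convex set `K` lying on one side of each of the lines
`Lᵢ` containing its sides) is invariant under the point reflection through `O`, which
also permutes the side lines, then `V(p) = Σ dist(p, Lᵢ)` is constant on the interior. -/
theorem sum_dist_const_of_point_reflection {n : ℕ} (a : Fin n → E2) (γ : Fin n → ℝ)
    (ha : ∀ i, a i ≠ 0) (K : Set E2) (hK : Convex ℝ K)
    (hside : ∀ i, ∀ p ∈ K, 0 ≤ ⟪a i, p⟫_ℝ + γ i)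
    (O : E2)
    (hKsym : (AffineEquiv.pointReflection ℝ O : E2 → E2) '' K = K)
    (σ : Equiv.Perm (Fin n))
    (hLsym : ∀ i, (AffineEquiv.pointReflection ℝ O : E2 → E2) '' line2 (a i) (γ i)
      = line2 (a (σ i)) (γ (σ i))) :
    ∀ p ∈ interior K, ∀ q ∈ interior K, sumDist a γ p = sumDist a γ q :=
  sum_dist_const_of_point_reflection_general a γ ha K hside O hKsym σ hLsym
end
end

section
/- Let K be a convex polygon whose sides lie on lines L₁,...,Lₙ with K on one side of each, and suppose K has a reflection symmetry across a line ℓ (the reflection maps K to K and permutes the lines Lᵢ). Then either V(p) = Σ dist(p, Lᵢ) is constant on K, or V, being affine with V(p) = v·p + c for some nonzero v, has v parallel to ℓ (so the level sets of V are perpendicular to ℓ). -/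
open Metric
open scoped InnerProductSpace

noncomputable section

/-!
The reflection `g` permutes the lines, so `V ∘ g = V`. If `V(p) = ⟪v, p⟫ + c` on `K`, then
`⟪v, g p⟫ = ⟪v, p⟫` on `K`; as `K` has interior, this forces the linear part of `g` to fix `v`.
It also fixes the direction `w - u` of `ℓ`. Were `v` not parallel to `ℓ`, these two vectors
would span the plane, so `g` would be the identity, contradicting `g ≠ id`.
-/

theorem sum_infDist_apply_eq_of_image_eq {α β ι : Type*} [PseudoMetricSpace α]
    [PseudoMetricSpace β] [Fintype ι] (g : α ≃ᵢ β) (s : ι → Set α) (t : ι → Set β)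
    (σ : Equiv.Perm ι) (h : ∀ i, g '' s i = t (σ i)) (p : α) :
    ∑ i, infDist (g p) (t i) = ∑ i, infDist p (s i) := by
  rw [← Equiv.sum_comp σ]
  refine Finset.sum_congr rfl fun i _ => ?_
  rw [← h i, infDist_image g.isometry]

theorem LinearIsometryEquiv.apply_eq_self_of_inner_apply_eq {E : Type*}
    [NormedAddCommGroup E] [InnerProductSpace ℝ E] (L : E ≃ₗᵢ[ℝ] E) {v : E}
    (h : ∀ x, ⟪v, L x⟫_ℝ = ⟪v, x⟫_ℝ) : L v = v := by
  have hsymm : L.symm v = v :=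
    ext_inner_right ℝ fun x => by rw [← L.inner_map_map, L.apply_symm_apply, h]
  simpa using congrArg L hsymm.symm

theorem AffineIsometryEquiv.linearIsometryEquiv_apply_eq_self_of_inner_eqOn {E : Type*}
    [NormedAddCommGroup E] [InnerProductSpace ℝ E] (f : E ≃ᵃⁱ[ℝ] E) {s : Set E}
    (hs : (interior s).Nonempty) {v : E} (h : ∀ p ∈ s, ⟪v, f p⟫_ℝ = ⟪v, p⟫_ℝ) :
    f.linearIsometryEquiv v = v := by
  have hspan : affineSpan ℝ s = ⊤ :=
    top_unique <| isOpen_interior.affineSpan_eq_top hs ▸ affineSpan_mono ℝ interior_subset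
  have heq : (innerₛₗ ℝ v).toAffineMap.comp f.toAffineMap = (innerₛₗ ℝ v).toAffineMap :=
    AffineMap.ext_on hspan fun p hp => h p hp
  refine f.linearIsometryEquiv.apply_eq_self_of_inner_apply_eq fun x => ?_
  simpa using LinearMap.congr_fun (congrArg AffineMap.linear heq) x

theorem LinearMap.eq_id_of_apply_eq_self_of_finrank_eq_two {K V : Type*} [Field K]
    [AddCommGroup V] [Module K V] (hV : Module.finrank K V = 2) (f : V →ₗ[K] V) {x y : V}
    (hx : x ≠ 0) (hxy : ∀ t : K, y ≠ t • x) (hfx : f x = x) (hfy : f y = y) :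
    f = LinearMap.id := by
  have hindep : LinearIndependent K ![x, y] :=
    (LinearIndependent.pair_iff' hx).2 fun t h => hxy t h.symm
  have hspan : Submodule.span K (Set.range ![x, y]) = ⊤ :=
    hindep.span_eq_top_of_card_eq_finrank (by simp [hV])
  refine LinearMap.ext_on_range hspan fun i => ?_
  fin_cases i
  exacts [hfx, hfy]

theorem sum_dist_reflection_symmetry_general {n : ℕ} (a : Fin n → E2) (γ : Fin n → ℝ)
    (K : Set E2)
    (hKint : (interior K).Nonempty)
    (u w : E2) (huw : u ≠ w)
    (g : E2 ≃ᵢ E2)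
    (hfix : ∀ q ∈ (affineSpan ℝ {u, w} : Set E2), g q = q)
    (hgne : ∃ q : E2, g q ≠ q)
    (hgK : g '' K = K)
    (σ : Equiv.Perm (Fin n))
    (hgL : ∀ i, g '' line2 (a i) (γ i) = line2 (a (σ i)) (γ (σ i))) :
    (∀ p ∈ K, ∀ q ∈ K, sumDist a γ p = sumDist a γ q) ∨
      (∀ v : E2, ∀ c : ℝ, v ≠ 0 →
        (∀ p ∈ K, sumDist a γ p = ⟪v, p⟫_ℝ + c) →
        ∃ t : ℝ, v = t • (w - u)) := by
  refine Or.inr fun v c _ hV => ?_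
  by_contra! hpar
  obtain ⟨q, hq⟩ := hgne
  set f := g.toRealAffineIsometryEquiv
  have hu : g u = u := hfix u (subset_affineSpan ℝ _ (by simp))
  have hw : g w = w := hfix w (subset_affineSpan ℝ _ (by simp))
  have hVg : ∀ p, sumDist a γ (g p) = sumDist a γ p :=
    sum_infDist_apply_eq_of_image_eq g _ _ σ hgL
  have hLv : f.linearIsometryEquiv v = v :=
    f.linearIsometryEquiv_apply_eq_self_of_inner_eqOn hKint fun p hp => by
      have hgp := hV (g p) (hgK ▸ Set.mem_image_of_mem g hp)
      rw [hVg, hV p hp] at hgp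
      exact (add_right_cancel hgp).symm
  have hLd : f.linearIsometryEquiv (w - u) = w - u := by
    simpa [f, hu, hw] using f.map_vsub w u
  have hL : ∀ x, f.linearIsometryEquiv x = x := LinearMap.congr_fun <|
    LinearMap.eq_id_of_apply_eq_self_of_finrank_eq_two finrank_euclideanSpace_fin
      f.linearIsometryEquiv.toLinearEquiv.toLinearMap (sub_ne_zero.2 huw.symm) hpar hLd hLv
  have hq' := f.map_vsub q u
  rw [hL] at hq'
  exact hq (by simpa [f, hu] using hq'.symm)

/-- Suppose the convex body `K` (with nonempty interior) lies on one side of each of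
the lines `Lᵢ`, and `K` has a reflection symmetry across the line `ℓ` through `u` and
`w`: the isometry `g` fixes `ℓ` pointwise, is not the identity, maps `K` onto itself and
permutes the lines `Lᵢ`. Then either `V(p) = Σ dist(p, Lᵢ)` is constant on `K`, or in
any affine representation `V(p) = v·p + c` on `K` with `v ≠ 0`, the vector `v` is
parallel to `ℓ` (so the isosum level sets are perpendicular to `ℓ`). -/
theorem sum_dist_reflection_symmetry {n : ℕ} (a : Fin n → E2) (γ : Fin n → ℝ)
    (ha : ∀ i, a i ≠ 0) (K : Set E2) (hK : Convex ℝ K)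
    (hKint : (interior K).Nonempty)
    (hside : ∀ i, ∀ p ∈ K, 0 ≤ ⟪a i, p⟫_ℝ + γ i)
    (u w : E2) (huw : u ≠ w)
    (g : E2 ≃ᵢ E2)
    (hfix : ∀ q ∈ (affineSpan ℝ {u, w} : Set E2), g q = q)
    (hgne : ∃ q : E2, g q ≠ q)
    (hgK : g '' K = K)
    (σ : Equiv.Perm (Fin n))
    (hgL : ∀ i, g '' line2 (a i) (γ i) = line2 (a (σ i)) (γ (σ i))) :
    (∀ p ∈ K, ∀ q ∈ K, sumDist a γ p = sumDist a γ q) ∨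
      (∀ v : E2, ∀ c : ℝ, v ≠ 0 →
        (∀ p ∈ K, sumDist a γ p = ⟪v, p⟫_ℝ + c) →
        ∃ t : ℝ, v = t • (w - u)) :=
  sum_dist_reflection_symmetry_general a γ K hKint u w huw g hfix hgne hgK σ hgL
end
end
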